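/- Let n be a positive integer not divisible by 4, let c = (1 2 … n) be an n-cycle in S_n, and let H = ⟨c⟩ be the cyclic subgroup of order n it generates. Then for every g ∈ S_n and every irreducible complex character χ of S(g) = H ∩ gHg⁻¹, the indicator ν₂(g,χ) equals 0 or 1. (Equivalently: every simple object of C(S_n, C_n) has Frobenius–Schur indicator 0 or 1.) -/

import Mathlib

open scoped BigOperators Pointwise Classical
open CategoryTheory

/-- For `H ≤ G` and `g ∈ G`, the stabilizer `S(g) = Stab_H(gH) = H ∩ gHg⁻¹`. -/
def stabCoset {G : Type*} [Group G] (H : Subgroup G) (g : G) : Subgroup G :=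
  H ⊓ Subgroup.map (MulAut.conj g).toMonoidHom H

/-- The `m`-th Frobenius–Schur indicator `ν_m(g,χ)` of the simple object of the
group-theoretical fusion category `C(G,H)` attached to `(g,χ)`:
`ν_m(g,χ) = (1/|S(g)|) Σ_{x ∈ H, (gx)^m ∈ H} conj(χ((gx)^m))`
(recall that for `x ∈ H`, `(gx)^m ∈ H` iff `(gx)^m ∈ S(g)`). -/
noncomputable def nuInd {G : Type*} [Group G] (H : Subgroup G) (g : G) (m : ℕ)
    (χ : ↥(stabCoset H g) → ℂ) : ℂ :=
  (Nat.card ↥(stabCoset H g) : ℂ)⁻¹ *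
    ∑ᶠ x : G, if h : x ∈ H ∧ (g * x) ^ m ∈ stabCoset H g
      then (starRingEnd ℂ) (χ ⟨(g * x) ^ m, h.2⟩) else 0

/-- The classical second Frobenius–Schur indicator `ν₂(θ) = (1/|K|) Σ_{x∈K} θ(x²)`. -/
noncomputable def fsInd {K : Type*} [Group K] (θ : K → ℂ) : ℂ :=
  (Nat.card K : ℂ)⁻¹ * ∑ᶠ x : K, θ (x ^ 2)

/-!
Since `H` is abelian, so is `S(g) ≤ H`, and an irreducible character `χ` of `S(g)` is linear.
If some `x₀ ∈ H` has `(g x₀)² ∈ H`, then the `x ∈ H` with `(g x)² ∈ H` form the coset `x₀ S(g)`,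
and `(g x₀ s)² = (g x₀)² (g⁻¹ s g) s` for `s ∈ S(g)`, where `s ↦ (g⁻¹ s g) s` is an endomorphism of
`S(g)`. Hence `ν₂ = conj χ((g x₀)²) · ⟨β, 1⟩` for the linear character `β(s) = conj χ((g⁻¹ s g) s)`,
which vanishes unless `β = 1`; in that case `β((g x₀)²) = 1` gives `χ((g x₀)²)² = 1`. When `4 ∤ n`
every square lying in `⟨c⟩` has odd order (if `n` is even, `c` is an odd permutation, so a square
`c^k` has `k` even and lies in `⟨c²⟩`, of odd order `n / 2`), which forces `χ((g x₀)²) = 1`.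
-/

namespace FDRep

variable {k G : Type*} [Field k] [IsAlgClosed k] [Group G] [IsMulCommutative G]

theorem exists_ρ_eq_smul_id (V : FDRep k G) [Simple V] (s : G) :
    ∃ c : k, V.ρ s = c • LinearMap.id := by
  let f : V ⟶ V := ⟨FGModuleCat.ofHom (V.ρ s), fun t => FGModuleCat.hom_ext <| by
    change V.ρ s * V.ρ t = V.ρ t * V.ρ s
    rw [← map_mul, ← map_mul, mul_comm' s t]⟩
  obtain ⟨c, hc⟩ := endomorphism_simple_eq_smul_id k f
  exact ⟨c, (congrArg (fun φ : V ⟶ V => φ.hom.hom.hom) hc).symm⟩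

variable [CharZero k] [Finite G]

theorem finrank_eq_one_of_simple (V : FDRep k G) [Simple V] : Module.finrank k V = 1 := by
  have := Fintype.ofFinite G
  have hcard : (Nat.card G : k) ≠ 0 := Nat.cast_ne_zero.mpr Nat.card_pos.ne'
  have : Invertible (Nat.card G : k) := invertibleOfNonzero hcard
  set d := Module.finrank k V
  -- every `ρ s` is a scalar, so `χ(s) χ(s⁻¹) = d²`, and orthonormality of `χ` gives `d² = 1`
  have hprod (s : G) : V.character s * V.character s⁻¹ = d * d := by
    obtain ⟨c, hc⟩ := exists_ρ_eq_smul_id V s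
    have hρ : c • V.ρ s⁻¹ = V.ρ (s * s⁻¹) := by
      rw [map_mul, hc, ← Module.End.one_eq_id, smul_mul_assoc, one_mul]
    calc V.character s * V.character s⁻¹
        = d * LinearMap.trace k V (c • V.ρ s⁻¹) := by
          simp only [character, hc, map_smul, LinearMap.trace_id, smul_eq_mul]; ring
      _ = d * d := by rw [hρ, mul_inv_cancel, map_one, LinearMap.trace_one]
  have horth := char_orthonormal V V
  rw [if_pos ⟨Iso.refl V⟩, Finset.sum_congr rfl fun s _ => hprod s, Finset.sum_const,
    Finset.card_univ, ← Nat.card_eq_fintype_card, nsmul_eq_mul,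
    inv_mul_cancel_left₀ hcard] at horth
  exact Nat.eq_one_of_mul_eq_one_right (m := d) (n := d) (by exact_mod_cast horth)

theorem ρ_eq_character_smul_id (V : FDRep k G) [Simple V] (s : G) :
    V.ρ s = V.character s • LinearMap.id := by
  obtain ⟨c, hc⟩ := exists_ρ_eq_smul_id V s
  rw [character, hc, map_smul, LinearMap.trace_id, finrank_eq_one_of_simple, Nat.cast_one,
    smul_eq_mul, mul_one]

theorem exists_monoidHom_coe_eq_character (V : FDRep k G) [Simple V] :
    ∃ χ : G →* k, ⇑χ = V.character := by
  refine ⟨⟨⟨V.character, ?_⟩, fun s t => ?_⟩, rfl⟩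
  · rw [char_one, finrank_eq_one_of_simple, Nat.cast_one]
  · change LinearMap.trace k V (V.ρ (s * t)) = V.character s * V.character t
    rw [map_mul, ρ_eq_character_smul_id V s, ← Module.End.one_eq_id, smul_mul_assoc, one_mul,
      map_smul, smul_eq_mul]
    rfl

end FDRep

section StabCoset

variable {G : Type*} [Group G] {H : Subgroup G} {g x y : G}

theorem mem_stabCoset_iff : x ∈ stabCoset H g ↔ x ∈ H ∧ g⁻¹ * x * g ∈ H := by
  refine and_congr_right fun _ => ⟨?_, fun h => ⟨g⁻¹ * x * g, h, ?_⟩⟩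
  · rintro ⟨z, hz, rfl⟩
    simpa [MulAut.conj_apply, mul_assoc] using hz
  · simp [MulAut.conj_apply, mul_assoc]

theorem inv_mul_mem_stabCoset (hx : x ∈ H) (hxsq : (g * x) ^ 2 ∈ H) (hy : y ∈ H)
    (hysq : (g * y) ^ 2 ∈ H) : x⁻¹ * y ∈ stabCoset H g := by
  refine mem_stabCoset_iff.mpr ⟨mul_mem (inv_mem hx) hy, ?_⟩
  have key : g⁻¹ * (x⁻¹ * y) * g = x * ((g * x) ^ 2)⁻¹ * (g * y) ^ 2 * y⁻¹ := by
    simp only [sq]; group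
  rw [key]
  exact mul_mem (mul_mem (mul_mem hx (inv_mem hxsq)) hysq) (inv_mem hy)

variable [IsMulCommutative H]

instance isMulCommutative_stabCoset : IsMulCommutative (stabCoset H g) :=
  .of_setLike_mul_comm fun _ ha _ hb => setLike_mul_comm (s := H) ha.1 hb.1

theorem conj_sq_eq_self_of_mem (hx : x ∈ H) (hxsq : (g * x) ^ 2 ∈ H) :
    g⁻¹ * (g * x) ^ 2 * g = (g * x) ^ 2 := by
  calc g⁻¹ * (g * x) ^ 2 * g = x * (g * x) ^ 2 * x⁻¹ := by simp only [sq]; group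
    _ = (g * x) ^ 2 := by rw [setLike_mul_comm hx hxsq, mul_inv_cancel_right]

theorem sq_mem_stabCoset (hx : x ∈ H) (hxsq : (g * x) ^ 2 ∈ H) : (g * x) ^ 2 ∈ stabCoset H g :=
  mem_stabCoset_iff.mpr ⟨hxsq, by rwa [conj_sq_eq_self_of_mem hx hxsq]⟩

def twistedSquare (H : Subgroup G) [IsMulCommutative H] (g : G) : stabCoset H g →* G where
  toFun s := g⁻¹ * s * g * s
  map_one' := by simp
  map_mul' s t := by
    have hcomm := setLike_mul_comm (mem_stabCoset_iff.mp t.2).2 (mem_stabCoset_iff.mp s.2).1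
    calc g⁻¹ * (s * t : G) * g * (s * t : G)
        = g⁻¹ * s * g * ((g⁻¹ * t * g) * s) * t := by group
      _ = g⁻¹ * s * g * s * (g⁻¹ * t * g * t) := by rw [hcomm]; group

theorem sq_mul_eq_sq_mul_twistedSquare (hx : x ∈ H) (s : stabCoset H g) :
    (g * (x * s)) ^ 2 = (g * x) ^ 2 * twistedSquare H g s := by
  have hcomm := setLike_mul_comm hx (mem_stabCoset_iff.mp s.2).2
  calc (g * (x * s)) ^ 2 = g * x * g * ((g⁻¹ * s * g) * x) * s := by simp only [sq]; group
    _ = (g * x) ^ 2 * (g⁻¹ * s * g * s) := by rw [← hcomm]; simp only [sq]; group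

theorem twistedSquare_mem (hx : x ∈ H) (hxsq : (g * x) ^ 2 ∈ H) (s : stabCoset H g) :
    twistedSquare H g s ∈ stabCoset H g := by
  have hs := mem_stabCoset_iff.mp s.2
  have hxs : x * s ∈ H := mul_mem hx hs.1
  have hxssq : (g * (x * s)) ^ 2 ∈ H := by
    rw [sq_mul_eq_sq_mul_twistedSquare hx s]
    exact mul_mem hxsq (mul_mem hs.2 hs.1)
  rw [← inv_mul_eq_iff_eq_mul.mpr (sq_mul_eq_sq_mul_twistedSquare hx s)]
  exact mul_mem (inv_mem (sq_mem_stabCoset hx hxsq)) (sq_mem_stabCoset hxs hxssq)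

theorem twistedSquare_sq (hx : x ∈ H) (hxsq : (g * x) ^ 2 ∈ H) :
    twistedSquare H g ⟨(g * x) ^ 2, sq_mem_stabCoset hx hxsq⟩ = ((g * x) ^ 2) ^ 2 := by
  change g⁻¹ * (g * x) ^ 2 * g * (g * x) ^ 2 = _
  rw [conj_sq_eq_self_of_mem hx hxsq, sq ((g * x) ^ 2)]

end StabCoset

theorem eq_one_of_sq_eq_one_of_pow_eq_one {M : Type*} [Monoid M] {a : M} {n : ℕ} (hn : Odd n)
    (ha2 : a ^ 2 = 1) (han : a ^ n = 1) : a = 1 := by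
  obtain ⟨k, rfl⟩ := hn
  rwa [pow_succ, pow_mul, ha2, one_pow, one_mul] at han

section Indicator

open ComplexConjugate

variable {G : Type*} [Group G] {H : Subgroup G} [IsMulCommutative H] {g x : G}

theorem nuInd_two_eq_mul_average (hx : x ∈ H) (hxsq : (g * x) ^ 2 ∈ H)
    (χ : stabCoset H g →* ℂ) :
    nuInd H g 2 χ = conj (χ ⟨(g * x) ^ 2, sq_mem_stabCoset hx hxsq⟩) *
      ((Nat.card (stabCoset H g) : ℂ)⁻¹ *
        ∑ᶠ s, conj (χ ⟨twistedSquare H g s, twistedSquare_mem hx hxsq s⟩)) := by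
  set Y : stabCoset H g := ⟨(g * x) ^ 2, sq_mem_stabCoset hx hxsq⟩
  rw [nuInd, mul_left_comm, mul_finsum _ (conj (χ Y))]
  congr 1
  set F : G → ℂ := fun y =>
    if h : y ∈ H ∧ (g * y) ^ 2 ∈ stabCoset H g then conj (χ ⟨(g * y) ^ 2, h.2⟩) else 0 with hF
  have hinj : Function.Injective fun s : stabCoset H g => x * s :=
    fun s t hst => Subtype.ext (mul_left_cancel hst)
  have hsupp : Function.support F ⊆ Set.range fun s : stabCoset H g => x * s := by
    intro y hy
    obtain ⟨hyH, hysq⟩ : y ∈ H ∧ (g * y) ^ 2 ∈ stabCoset H g := by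
      by_contra h
      exact hy (dif_neg h)
    exact ⟨⟨x⁻¹ * y, inv_mul_mem_stabCoset hx hxsq hyH (mem_stabCoset_iff.mp hysq).1⟩,
      mul_inv_cancel_left x y⟩
  calc ∑ᶠ y, F y = ∑ᶠ y ∈ Set.range fun s : stabCoset H g => x * s, F y := by
        rw [finsum_mem_def, Set.indicator_eq_self.mpr hsupp]
    _ = ∑ᶠ s : stabCoset H g, F (x * s) := finsum_mem_range hinj
    _ = _ := finsum_congr fun s => by
        have hsq : (g * (x * s)) ^ 2 = (Y * ⟨_, twistedSquare_mem hx hxsq s⟩ : stabCoset H g) :=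
          sq_mul_eq_sq_mul_twistedSquare hx s
        have hmem : x * s ∈ H ∧ (g * (x * s)) ^ 2 ∈ stabCoset H g :=
          ⟨mul_mem hx (mem_stabCoset_iff.mp s.2).1, hsq ▸ SetLike.coe_mem _⟩
        simp only [hF]
        rw [dif_pos hmem, ← map_mul, ← map_mul]
        exact congrArg (conj ∘ χ) (Subtype.ext hsq)

theorem nuInd_two_eq_zero_or_one [Finite G] (hodd : ∀ y : G, y ^ 2 ∈ H → Odd (orderOf (y ^ 2)))
    (g : G) (χ : stabCoset H g →* ℂ) : nuInd H g 2 χ = 0 ∨ nuInd H g 2 χ = 1 := by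
  by_cases hex : ∃ x ∈ H, (g * x) ^ 2 ∈ H
  swap
  · push Not at hex
    refine .inl ?_
    rw [nuInd, finsum_eq_zero_of_forall_eq_zero fun y =>
      dif_neg fun h => hex y h.1 (mem_stabCoset_iff.mp h.2).1, mul_zero]
  obtain ⟨x, hx, hxsq⟩ := hex
  have := Fintype.ofFinite (stabCoset H g)
  set Y : stabCoset H g := ⟨(g * x) ^ 2, sq_mem_stabCoset hx hxsq⟩
  let β : stabCoset H g →* ℂ := (starRingEnd ℂ).toMonoidHom.comp <|
    χ.comp <| (twistedSquare H g).codRestrict _ (twistedSquare_mem hx hxsq)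
  rw [nuInd_two_eq_mul_average hx hxsq, finsum_eq_sum_of_fintype]
  change conj (χ Y) * (_ * ∑ s, β s) = _ ∨ conj (χ Y) * (_ * ∑ s, β s) = _
  by_cases hβ : β = 1
  · refine .inr ?_
    have hY2 : χ Y ^ 2 = 1 := by
      have hβY : β Y = 1 := DFunLike.congr_fun hβ Y
      have hYsq : (twistedSquare H g).codRestrict _ (twistedSquare_mem hx hxsq) Y = Y ^ 2 :=
        Subtype.ext (twistedSquare_sq hx hxsq)
      rw [← map_pow, ← hYsq]
      exact (map_eq_one_iff _ (starRingEnd ℂ).injective).mp hβY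
    have hYodd : χ Y ^ orderOf Y = 1 := by rw [← map_pow, pow_orderOf_eq_one, map_one]
    have hYord : orderOf Y = orderOf ((g * x) ^ 2) := Subgroup.orderOf_mk _ _
    have hχY : χ Y = 1 :=
      eq_one_of_sq_eq_one_of_pow_eq_one (hYord ▸ hodd (g * x) hxsq) hY2 hYodd
    simp only [hβ, MonoidHom.one_apply, Finset.sum_const, Finset.card_univ, nsmul_one]
    rw [← Nat.card_eq_fintype_card,
      inv_mul_cancel₀ (Nat.cast_ne_zero.mpr Nat.card_pos.ne'), hχY, map_one, mul_one]
  · refine .inl ?_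
    rw [sum_hom_units_eq_zero β hβ, mul_zero, mul_zero]

end Indicator

theorem odd_orderOf_sq_of_mem_zpowers {G : Type*} [Group G] (σ : G →* ℤˣ) {c y : G}
    (hσ : Even (orderOf c) → σ c = -1) (h4 : ¬ 4 ∣ orderOf c)
    (hy : y ^ 2 ∈ Subgroup.zpowers c) : Odd (orderOf (y ^ 2)) := by
  rcases Nat.even_or_odd (orderOf c) with ⟨m, hm⟩ | hodd
  · have hfin : IsOfFinOrder c := orderOf_pos_iff.mp (by omega)
    obtain ⟨k, hk : c ^ k = y ^ 2⟩ := hfin.mem_powers_iff_mem_zpowers.mpr hy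
    have hk_even : Even k := by
      have hσk : σ c ^ k = 1 := by rw [← map_pow, hk, map_pow, Int.units_sq]
      rw [hσ ⟨m, hm⟩] at hσk
      exact (neg_one_pow_eq_one_iff_even (by decide)).mp hσk
    obtain ⟨j, rfl⟩ := hk_even
    have hmem : y ^ 2 ∈ Subgroup.zpowers (c ^ 2) :=
      Subgroup.mem_zpowers_iff.mpr ⟨j, by rw [zpow_natCast, ← pow_mul, two_mul, hk]⟩
    have hord : orderOf (c ^ 2) = m := by
      rw [orderOf_pow_of_dvd two_ne_zero ⟨m, by omega⟩]; omega
    refine Odd.of_dvd_nat ?_ (hord ▸ orderOf_dvd_of_mem_zpowers hmem)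
    exact Nat.odd_iff.mpr (by omega)
  · exact hodd.of_dvd_nat (orderOf_dvd_of_mem_zpowers hy)

theorem orderOf_finRotate {n : ℕ} (hn : 0 < n) : orderOf (finRotate n) = n := by
  obtain rfl | h := (Nat.one_le_iff_ne_zero.mpr hn.ne').eq_or_lt
  · rw [finRotate_one, ← Equiv.Perm.one_def, orderOf_one]
  · rw [← Equiv.Perm.lcm_cycleType, cycleType_finRotate_of_le h]
    simp

theorem sign_finRotate_of_even {n : ℕ} (hn : Even n) (hpos : 0 < n) :
    Equiv.Perm.sign (finRotate n) = -1 := by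
  rw [sign_finRotate]
  exact Odd.neg_one_pow (Nat.Even.sub_odd hpos hn odd_one)

/-- Let `n > 0` not be divisible by `4` and let `C_n ⊆ S_n` be the cyclic subgroup of order
`n` generated by the `n`-cycle `(1 2 … n)` (formalized as `finRotate n`). Then every simple
object of `C(S_n, C_n)` has Frobenius–Schur indicator `0` or `1`. -/
theorem stmt_16 (n : ℕ) (hn : 0 < n) (h4 : ¬ (4 ∣ n)) (g : Equiv.Perm (Fin n)) :
    ∀ (V : FDRep ℂ ↥(stabCoset (Subgroup.zpowers (finRotate n)) g)), Simple V →
      nuInd (Subgroup.zpowers (finRotate n)) g 2 V.character = 0 ∨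
      nuInd (Subgroup.zpowers (finRotate n)) g 2 V.character = 1 := by
  intro V _
  obtain ⟨χ, hχ⟩ := FDRep.exists_monoidHom_coe_eq_character V
  rw [← hχ]
  have hord := orderOf_finRotate hn
  refine nuInd_two_eq_zero_or_one (fun y hy => ?_) g χ
  refine odd_orderOf_sq_of_mem_zpowers Equiv.Perm.sign (fun he => ?_) (by rwa [hord]) hy
  exact sign_finRotate_of_even (by rwa [hord] at he) hn
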